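/- For every step size s > 0, along any solution X of the critical high-resolution differential equation Ẍ(t) + ∇f(X(t) + √s Ẋ(t)) = 0, the Lyapunov function E(t) = f(X(t) + √s Ẋ(t)) − f(x⋆) + (1/2)‖Ẋ(t)‖² satisfies the exact identity dE(t)/dt = − √s ‖∇f(X(t) + √s Ẋ(t))‖² for all t > 0; in particular E is nonincreasing. -/

import Mathlib

open scoped InnerProductSpace

/-! The energy `f (X + c • V) + ½‖V‖²` is differentiated by the chain rule: the potential part
contributes `⟪∇f, V - c • ∇f⟫` and the kinetic part `⟪V, -∇f⟫`, so the cross terms cancel and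
only the damping `-c ‖∇f‖²` survives. For `c = √s ≥ 0` this is nonpositive, whence monotonicity. -/

section

variable {E : Type*} [NormedAddCommGroup E] [InnerProductSpace ℝ E]

theorem HasDerivAt.half_norm_sq {V : ℝ → E} {v : E} {t : ℝ} (hV : HasDerivAt V v t) :
    HasDerivAt (fun u => (1 / 2 : ℝ) * ‖V u‖ ^ 2) ⟪V t, v⟫_ℝ t := by
  simpa using hV.norm_sq.const_mul (1 / 2 : ℝ)

variable [CompleteSpace E]

theorem HasGradientAt.comp_hasDerivAt {f : E → ℝ} {g : E} {Y : ℝ → E} {y : E} {t : ℝ}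
    (hf : HasGradientAt f g (Y t)) (hY : HasDerivAt Y y t) :
    HasDerivAt (fun u => f (Y u)) ⟪g, y⟫_ℝ t :=
  (hf.hasFDerivAt.comp_hasDerivAt t hY).congr_deriv (by simp)

theorem hasDerivAt_dampedEnergy {f : E → ℝ} {f' : E → E} {X V : ℝ → E} {c m t : ℝ}
    (hf : HasGradientAt f (f' (X t + c • V t)) (X t + c • V t)) (hX : HasDerivAt X (V t) t)
    (hV : HasDerivAt V (-f' (X t + c • V t)) t) :
    HasDerivAt (fun u => f (X u + c • V u) - m + (1 / 2) * ‖V u‖ ^ 2)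
      (-c * ‖f' (X t + c • V t)‖ ^ 2) t := by
  have hpos : HasDerivAt (fun u => X u + c • V u) (V t - c • f' (X t + c • V t)) t :=
    (hX.add (hV.const_smul c)).congr_deriv (by rw [smul_neg, ← sub_eq_add_neg])
  refine ((hf.comp_hasDerivAt hpos).sub_const m |>.add hV.half_norm_sq).congr_deriv ?_
  rw [inner_sub_right, inner_smul_right, real_inner_self_eq_norm_sq, inner_neg_right,
    real_inner_comm]
  ring

end

theorem antitoneOn_of_hasDerivAt_nonpos {D : Set ℝ} (hD : Convex ℝ D) (hDo : IsOpen D)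
    {f f' : ℝ → ℝ} (hf : ∀ x ∈ D, HasDerivAt f (f' x) x) (hf' : ∀ x ∈ D, f' x ≤ 0) :
    AntitoneOn f D := by
  refine antitoneOn_of_hasDerivWithinAt_nonpos (f' := f') hD
    (fun x hx => (hf x hx).continuousAt.continuousWithinAt) (fun x hx => ?_) (fun x hx => ?_)
  · rw [hDo.interior_eq] at hx ⊢
    exact (hf x hx).hasDerivWithinAt
  · exact hf' x (interior_subset hx)

theorem critical_continuous_lyapunov_identity
    (s : ℝ)
    {d : ℕ} (f : EuclideanSpace ℝ (Fin d) → ℝ)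
    (f' : EuclideanSpace ℝ (Fin d) → EuclideanSpace ℝ (Fin d))
    (xstar : EuclideanSpace ℝ (Fin d))
    (X V : ℝ → EuclideanSpace ℝ (Fin d))
    (hgrad : ∀ z, HasGradientAt f (f' z) z)
    (hX : ∀ t ∈ Set.Ioi (0 : ℝ), HasDerivAt X (V t) t)
    (hV : ∀ t ∈ Set.Ioi (0 : ℝ),
      HasDerivAt V (-(f' (X t + Real.sqrt s • V t))) t) :
    (∀ t ∈ Set.Ioi (0 : ℝ),
      HasDerivAt
        (fun u : ℝ => f (X u + Real.sqrt s • V u) - f xstar + (1 / 2) * ‖V u‖ ^ 2)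
        (-Real.sqrt s * ‖f' (X t + Real.sqrt s • V t)‖ ^ 2) t) ∧
    AntitoneOn
      (fun u : ℝ => f (X u + Real.sqrt s • V u) - f xstar + (1 / 2) * ‖V u‖ ^ 2)
      (Set.Ioi 0) := by
  have hderiv := fun t ht => hasDerivAt_dampedEnergy (m := f xstar) (hgrad _) (hX t ht) (hV t ht)
  refine ⟨hderiv, antitoneOn_of_hasDerivAt_nonpos (convex_Ioi 0) isOpen_Ioi hderiv
    fun _ _ => mul_nonpos_of_nonpos_of_nonneg (neg_nonpos.2 (Real.sqrt_nonneg s)) (sq_nonneg _)⟩
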